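/- Let f be an n-variate boolean function that is neither monotone nor antimonotone. Then the limit lim_{k→∞} bs(f^(k))^{1/k} exists and is finite. -/

import Mathlib

open Filter

namespace BS

variable {I : Type*} [Fintype I] [DecidableEq I]

/-- Flip the bits of `x` indexed by `B`. -/
def flipSet (x : I → Bool) (B : Finset I) : I → Bool :=
  fun i => if i ∈ B then !(x i) else x i

/-- `B` is a block of `f` at `x`. -/
def IsBlock (f : (I → Bool) → Bool) (x : I → Bool) (B : Finset I) : Prop :=
  f (flipSet x B) ≠ f x

/-- Block sensitivity of `f` at `x`: the maximum number of pairwise disjoint blocks. -/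
noncomputable def bsAt (f : (I → Bool) → Bool) (x : I → Bool) : ℕ :=
  sSup {k | ∃ B : Fin k → Finset I, (∀ t, IsBlock f x (B t)) ∧
    ∀ t t', t ≠ t' → Disjoint (B t) (B t')}

/-- Block sensitivity of `f`. -/
noncomputable def bs (f : (I → Bool) → Bool) : ℕ :=
  sSup {k | ∃ x, k = bsAt f x}

/-- `b`-block sensitivity of `f`. -/
noncomputable def bsb (f : (I → Bool) → Bool) (b : Bool) : ℕ :=
  sSup {k | ∃ x, f x = b ∧ k = bsAt f x}

/-- `M`-fold block sensitivity of `f` at `x`. -/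
noncomputable def bsMAt (f : (I → Bool) → Bool) (M : ℕ) (x : I → Bool) : ℕ :=
  sSup {k | ∃ B : Fin k → Finset I, (∀ t, IsBlock f x (B t)) ∧
    ∀ i : I, (Finset.univ.filter (fun t => i ∈ B t)).card ≤ M}

/-- `M`-fold `b`-block sensitivity of `f`. -/
noncomputable def bsMb (f : (I → Bool) → Bool) (M : ℕ) (b : Bool) : ℕ :=
  sSup {k | ∃ x, f x = b ∧ k = bsMAt f M x}

/-- Fractional block sensitivity of `f` at `x`. -/
noncomputable def fbsAt (f : (I → Bool) → Bool) (x : I → Bool) : ℝ :=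
  sSup {s | ∃ lam : Finset I → ℝ, (∀ B, 0 ≤ lam B) ∧
    (∀ B, ¬ IsBlock f x B → lam B = 0) ∧
    (∀ i : I, ∑ B ∈ Finset.univ.filter (fun B : Finset I => i ∈ B), lam B ≤ 1) ∧
    s = ∑ B : Finset I, lam B}

/-- Fractional block sensitivity of `f`. -/
noncomputable def fbs (f : (I → Bool) → Bool) : ℝ :=
  sSup {s | ∃ x, s = fbsAt f x}

/-- Fractional `b`-block sensitivity of `f`. -/
noncomputable def fbsb (f : (I → Bool) → Bool) (b : Bool) : ℝ :=
  sSup {s | ∃ x, f x = b ∧ s = fbsAt f x}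

/-- Certificate complexity of `f` at `x`. -/
noncomputable def CAt (f : (I → Bool) → Bool) (x : I → Bool) : ℕ :=
  sInf {k | ∃ S : Finset I, (∀ B, IsBlock f x B → (S ∩ B).Nonempty) ∧ k = S.card}

/-- Certificate complexity of `f`. -/
noncomputable def Cm (f : (I → Bool) → Bool) : ℕ :=
  sSup {k | ∃ x, k = CAt f x}

/-- `b`-certificate complexity of `f`. -/
noncomputable def Cb (f : (I → Bool) → Bool) (b : Bool) : ℕ :=
  sSup {k | ∃ x, f x = b ∧ k = CAt f x}

/-- Fractional certificate complexity of `f` at `x`. -/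
noncomputable def fCAt (f : (I → Bool) → Bool) (x : I → Bool) : ℝ :=
  sInf {s | ∃ w : I → ℝ, (∀ i, 0 ≤ w i ∧ w i ≤ 1) ∧
    (∀ B, IsBlock f x B → 1 ≤ ∑ i ∈ B, w i) ∧ s = ∑ i, w i}

/-- Fractional certificate complexity of `f`. -/
noncomputable def fC (f : (I → Bool) → Bool) : ℝ :=
  sSup {s | ∃ x, s = fCAt f x}

/-- Composition `f ∘ g` of boolean functions. -/
def comp {J : Type*} [Fintype J] [DecidableEq J]
    (f : (I → Bool) → Bool) (g : (J → Bool) → Bool) :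
    ((I × J) → Bool) → Bool :=
  fun x => f (fun i => g (fun j => x (i, j)))

/-- `k`-fold iterated composition `f^(k)` of an `n`-variate boolean function; the
variables of `f^(k)` are indexed by strings in `Fin k → Fin n`.  `f^(0)` is the
univariate identity function. -/
def iter {n : ℕ} (f : (Fin n → Bool) → Bool) :
    (k : ℕ) → ((Fin k → Fin n) → Bool) → Bool
  | 0, x => x (fun i => i.elim0)
  | k + 1, x => f (fun i => iter f k (fun s => x (Fin.cons i s)))

/-- Spectral radius of a real square matrix: the maximum of `|μ|` over the complex
eigenvalues `μ` of the matrix. -/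
noncomputable def specRad {m : Type*} [Fintype m] [DecidableEq m]
    (A : Matrix m m ℝ) : ℝ :=
  sSup {r | ∃ μ : ℂ, μ ∈ spectrum ℂ (A.map Complex.ofReal) ∧ r = ‖μ‖}

end BS

/-!
Write `W k = bsMin (f^(k))`, the smaller of the `0`- and `1`-block sensitivities of `f^(k)`.
Placing disjoint blocks of the inner copies of `g` inside each of disjoint blocks of `f` gives
`bs_b (f ∘ g) ≥ bs_b f * bsMin g`, so `W` is supermultiplicative; as `W k ≤ n ^ k`, Fekete's
lemma makes `W k ^ (1 / k)` converge. Because `f` is neither monotone nor antitone, for all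
`b, b'` it has a point `z` with `f z = b` and a coordinate `i` with `z i = b'` at which `f` is
sensitive; feeding a `b'`-input of `g` of maximal block sensitivity into position `i` gives
`bs_b (f ∘ g) ≥ bs_b' g`. Hence `W k ≤ bs (f^(k)) ≤ W (k + 1)`, and `bs (f^(k)) ^ (1 / k)` has
the same limit.
-/

open Function Topology

theorem surjective_of_not_monotone {α : Type*} [Preorder α] {f : α → Bool} (h : ¬Monotone f) :
    Surjective f := by
  intro b
  by_contra hb
  simp only [not_exists] at hb
  exact h fun x y _ => by rw [Bool.eq_not.2 (hb x), Bool.eq_not.2 (hb y)]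

theorem exists_tendsto_log_div_of_supermul {u : ℕ → ℝ} {C : ℝ} (hpos : ∀ k, 0 < u k)
    (hmul : ∀ m k, u m * u k ≤ u (m + k)) (hC : ∀ k, u k ≤ C ^ k) :
    ∃ L, Tendsto (fun k : ℕ => Real.log (u k) / k) atTop (𝓝 L) := by
  have hsub : Subadditive fun k => -Real.log (u k) := fun m k => by
    rw [← neg_add, neg_le_neg_iff, ← Real.log_mul (hpos m).ne' (hpos k).ne']
    exact Real.log_le_log (mul_pos (hpos m) (hpos k)) (hmul m k)
  have hbdd : BddBelow (Set.range fun k : ℕ => -Real.log (u k) / k) := by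
    refine ⟨-|Real.log C|, ?_⟩
    rintro _ ⟨k, rfl⟩
    rcases k.eq_zero_or_pos with rfl | hk
    · simp
    have hlog : Real.log (u k) ≤ k * Real.log C := by
      rw [← Real.log_pow]
      exact Real.log_le_log (hpos k) (hC k)
    rw [le_div_iff₀ (by exact_mod_cast hk)]
    nlinarith [le_abs_self (Real.log C)]
  refine ⟨-hsub.lim, (hsub.tendsto_lim hbdd).neg.congr fun k => ?_⟩
  simp only [neg_div, neg_neg]

theorem tendsto_log_div_of_le_of_le_succ {u a : ℕ → ℝ} {L : ℝ}
    (hu : Tendsto (fun k : ℕ => Real.log (u k) / k) atTop (𝓝 L)) (hpos : ∀ k, 0 < u k)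
    (hle : ∀ k, u k ≤ a k) (hle_succ : ∀ k, a k ≤ u (k + 1)) :
    Tendsto (fun k : ℕ => Real.log (a k) / k) atTop (𝓝 L) := by
  have hshift : Tendsto (fun k : ℕ => Real.log (u (k + 1)) / k) atTop (𝓝 L) := by
    have h := ((tendsto_add_atTop_iff_nat 1).2 hu).div (tendsto_natCast_div_add_atTop 1)
      one_ne_zero
    rw [div_one] at h
    refine h.congr fun k => ?_
    push_cast
    exact div_div_div_cancel_right₀ (by positivity) _ _
  refine tendsto_of_tendsto_of_tendsto_of_le_of_le hu hshift (fun k => ?_) (fun k => ?_)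
  · exact div_le_div_of_nonneg_right (Real.log_le_log (hpos k) (hle k)) k.cast_nonneg
  · exact div_le_div_of_nonneg_right
      (Real.log_le_log ((hpos k).trans_le (hle k)) (hle_succ k)) k.cast_nonneg

theorem tendsto_rpow_one_div_of_tendsto_log_div {a : ℕ → ℝ} {L : ℝ}
    (ha : Tendsto (fun k : ℕ => Real.log (a k) / k) atTop (𝓝 L)) (hpos : ∀ k, 0 < a k) :
    Tendsto (fun k : ℕ => a k ^ (1 / (k : ℝ))) atTop (𝓝 (Real.exp L)) :=
  ((Real.continuous_exp.tendsto L).comp ha).congr fun k => by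
    rw [Function.comp_apply, Real.rpow_def_of_pos (hpos k), mul_one_div]

namespace BS

section Blocks

variable {I : Type*} [DecidableEq I]

@[simp]
theorem flipSet_apply (x : I → Bool) (B : Finset I) (i : I) :
    flipSet x B i = if i ∈ B then !x i else x i := rfl

@[simp]
theorem flipSet_empty (x : I → Bool) : flipSet x ∅ = x := by
  funext i; simp

@[simp]
theorem flipSet_flipSet (x : I → Bool) (B : Finset I) : flipSet (flipSet x B) B = x := by
  funext i; by_cases hi : i ∈ B <;> simp [hi]

theorem flipSet_insert (x : I → Bool) {a : I} {B : Finset I} (ha : a ∉ B) :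
    flipSet x (insert a B) = flipSet (flipSet x B) {a} := by
  funext i; by_cases hi : i = a <;> simp [hi, ha]

theorem IsBlock.nonempty {f : (I → Bool) → Bool} {x : I → Bool} {B : Finset I}
    (h : IsBlock f x B) : B.Nonempty := by
  rw [Finset.nonempty_iff_ne_empty]
  rintro rfl
  exact h (by rw [flipSet_empty])

variable [Fintype I]

theorem flipSet_filter_ne (x y : I → Bool) :
    flipSet x (Finset.univ.filter fun i => x i ≠ y i) = y := by
  funext i; cases hx : x i <;> cases hy : y i <;> simp [hx, hy]

variable {f : (I → Bool) → Bool} {x : I → Bool}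

theorem card_le_card_of_blocks {ι : Type*} [Fintype ι] {B : ι → Finset I}
    (hB : ∀ t, IsBlock f x (B t)) (hd : Pairwise (Disjoint on B)) :
    Fintype.card ι ≤ Fintype.card I := by
  choose a ha using fun t => (hB t).nonempty
  refine Fintype.card_le_of_injective a fun t t' hat => ?_
  by_contra hne
  exact Finset.disjoint_left.1 (hd hne) (ha t) (hat ▸ ha t')

theorem bddAbove_blocks :
    BddAbove {k | ∃ B : Fin k → Finset I, (∀ t, IsBlock f x (B t)) ∧
      ∀ t t', t ≠ t' → Disjoint (B t) (B t')} :=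
  ⟨Fintype.card I, fun k ⟨_, hB, hd⟩ => by
    simpa using card_le_card_of_blocks hB fun t t' => hd t t'⟩

theorem card_le_bsAt {ι : Type*} [Fintype ι] {B : ι → Finset I}
    (hB : ∀ t, IsBlock f x (B t)) (hd : Pairwise (Disjoint on B)) :
    Fintype.card ι ≤ bsAt f x := by
  let e := (Fintype.equivFin ι).symm
  exact le_csSup bddAbove_blocks
    ⟨B ∘ e, fun t => hB (e t), fun t t' htt => hd (e.injective.ne htt)⟩

theorem exists_blocks_of_le_bsAt {k : ℕ} (hk : k ≤ bsAt f x) :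
    ∃ B : Fin k → Finset I, (∀ t, IsBlock f x (B t)) ∧ Pairwise (Disjoint on B) := by
  obtain ⟨B, hB, hd⟩ : bsAt f x ∈ {k | ∃ B : Fin k → Finset I, (∀ t, IsBlock f x (B t)) ∧
      ∀ t t', t ≠ t' → Disjoint (B t) (B t')} :=
    Nat.sSup_mem ⟨0, Fin.elim0, Fin.rec0, Fin.rec0⟩ bddAbove_blocks
  exact ⟨B ∘ Fin.castLE hk, fun t => hB _,
    fun t t' htt => hd _ _ ((Fin.castLE_injective hk).ne htt)⟩

theorem bsAt_le_card : bsAt f x ≤ Fintype.card I := by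
  obtain ⟨B, hB, hd⟩ := exists_blocks_of_le_bsAt (le_refl (bsAt f x))
  simpa using card_le_card_of_blocks hB hd

theorem one_le_bsAt {y : I → Bool} (hy : f y ≠ f x) : 1 ≤ bsAt f x := by
  have hB : IsBlock f x (Finset.univ.filter fun i => x i ≠ y i) := by
    rw [IsBlock, flipSet_filter_ne]; exact hy
  simpa using card_le_bsAt (ι := Unit) (fun _ => hB) (Subsingleton.pairwise)

theorem bsAt_le_bsb {b : Bool} (hx : f x = b) : bsAt f x ≤ bsb f b :=
  le_csSup ⟨Fintype.card I, by rintro _ ⟨y, -, rfl⟩; exact bsAt_le_card⟩ ⟨x, hx, rfl⟩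

theorem exists_bsAt_eq_bsb {b : Bool} (hb : ∃ x, f x = b) :
    ∃ x, f x = b ∧ bsAt f x = bsb f b := by
  obtain ⟨x, hx⟩ := hb
  obtain ⟨y, hy, he⟩ := Nat.sSup_mem (s := {k | ∃ x, f x = b ∧ k = bsAt f x})
    ⟨_, x, hx, rfl⟩ ⟨Fintype.card I, by rintro _ ⟨y, -, rfl⟩; exact bsAt_le_card⟩
  exact ⟨y, hy, he.symm⟩

theorem bsAt_le_bs (f : (I → Bool) → Bool) (x : I → Bool) : bsAt f x ≤ bs f :=
  le_csSup ⟨Fintype.card I, by rintro _ ⟨y, rfl⟩; exact bsAt_le_card⟩ ⟨x, rfl⟩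

theorem bs_le_card (f : (I → Bool) → Bool) : bs f ≤ Fintype.card I :=
  csSup_le' fun _ ⟨_, hk⟩ => hk ▸ bsAt_le_card

theorem bs_le_of_forall_bsb_le {m : ℕ} (h : ∀ b, bsb f b ≤ m) : bs f ≤ m :=
  csSup_le' fun _ ⟨x, hk⟩ => hk ▸ (bsAt_le_bsb rfl).trans (h (f x))

end Blocks

section BsMin

variable {I : Type*} [DecidableEq I]

noncomputable def bsMin (f : (I → Bool) → Bool) : ℕ :=
  min (bsb f false) (bsb f true)

theorem bsMin_le_bsb (f : (I → Bool) → Bool) (b : Bool) : bsMin f ≤ bsb f b := by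
  cases b
  exacts [min_le_left _ _, min_le_right _ _]

variable [Fintype I]

theorem bsMin_le_bs (f : (I → Bool) → Bool) : bsMin f ≤ bs f :=
  (bsMin_le_bsb f false).trans <| csSup_le' fun _ ⟨x, _, hk⟩ => hk ▸ bsAt_le_bs f x

theorem one_le_bsMin {f : (I → Bool) → Bool} (hf : Surjective f) : 1 ≤ bsMin f := by
  have h (b : Bool) : 1 ≤ bsb f b := by
    obtain ⟨x, hx⟩ := hf b
    obtain ⟨y, hy⟩ := hf !b
    exact (one_le_bsAt (y := y) (by simp [hx, hy])).trans (bsAt_le_bsb hx)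
  exact le_min (h false) (h true)

end BsMin

section Sensitivity

variable {I : Type*} [DecidableEq I] {f : (I → Bool) → Bool}

theorem isBlock_flipSet {x : I → Bool} {B : Finset I} (h : IsBlock f x B) :
    IsBlock f (flipSet x B) B := by
  rw [IsBlock, flipSet_flipSet]
  exact h.symm

theorem exists_isBlock_singleton_of_flipSet (x : I → Bool) {D : Finset I}
    (hD : ∀ i ∈ D, x i = false) (h : f (flipSet x D) ≠ f x) :
    ∃ z i, z i = false ∧ f z = f x ∧ IsBlock f z {i} := by
  induction D using Finset.induction_on with
  | empty => exact absurd (by rw [flipSet_empty]) h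
  | insert a D ha ih =>
    by_cases hD' : f (flipSet x D) = f x
    · refine ⟨flipSet x D, a, by simp [ha, hD a (Finset.mem_insert_self a D)], hD', ?_⟩
      rw [IsBlock, ← flipSet_insert x ha, hD']
      exact h
    · exact ih (fun i hi => hD i (Finset.mem_insert_of_mem hi)) hD'

variable [Fintype I]

theorem exists_isBlock_singleton_of_le {x y : I → Bool} (hxy : x ≤ y) (h : f y ≠ f x) :
    ∃ z i, z i = false ∧ f z = f x ∧ IsBlock f z {i} := by
  refine exists_isBlock_singleton_of_flipSet x (fun i hi => ?_) (by rwa [flipSet_filter_ne])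
  have hlt : x i < y i := lt_of_le_of_ne (hxy i) (by simpa using hi)
  exact (Bool.lt_iff.1 hlt).1

theorem exists_isBlock_singleton (hmono : ¬Monotone f) (hanti : ¬Antitone f) (b b' : Bool) :
    ∃ z i, f z = b ∧ z i = b' ∧ IsBlock f z {i} := by
  have hfalse (c : Bool) : ∃ z i, z i = false ∧ f z = c ∧ IsBlock f z {i} := by
    obtain ⟨x, y, hxy, hlt⟩ : ∃ x y : I → Bool, x ≤ y ∧ (f x = c ∧ f y = !c) := by
      cases c
      · simp only [Antitone, not_forall, exists_prop, not_le, Bool.lt_iff] at hanti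
        exact hanti
      · simp only [Monotone, not_forall, exists_prop, not_le, Bool.lt_iff] at hmono
        obtain ⟨x, y, hxy, hy, hx⟩ := hmono
        exact ⟨x, y, hxy, hx, hy⟩
    obtain ⟨z, i, hzi, hz, hblock⟩ := exists_isBlock_singleton_of_le hxy (f := f) (by simp [hlt])
    exact ⟨z, i, hzi, hz.trans hlt.1, hblock⟩
  cases b'
  · obtain ⟨z, i, hzi, hz, hblock⟩ := hfalse b
    exact ⟨z, i, hz, hzi, hblock⟩
  · obtain ⟨z, i, hzi, hz, hblock⟩ := hfalse !b
    refine ⟨flipSet z {i}, i, ?_, by simp [hzi], isBlock_flipSet hblock⟩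
    simpa [hz] using Bool.eq_not.2 hblock

end Sensitivity

section Comp

variable {I J : Type*} [Fintype I] [DecidableEq I] [Fintype J] [DecidableEq J]
  {f : (I → Bool) → Bool} {g : (J → Bool) → Bool}

def liftBlock (S : Finset I) (C : I → Finset J) : Finset (I × J) :=
  Finset.univ.filter fun p => p.1 ∈ S ∧ p.2 ∈ C p.1

@[simp]
theorem mem_liftBlock {S : Finset I} {C : I → Finset J} {p : I × J} :
    p ∈ liftBlock S C ↔ p.1 ∈ S ∧ p.2 ∈ C p.1 := by
  simp [liftBlock]

theorem isBlock_comp {y : I → J → Bool} {S : Finset I} {C : I → Finset J}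
    (hS : IsBlock f (fun i => g (y i)) S) (hC : ∀ i ∈ S, IsBlock g (y i) (C i)) :
    IsBlock (comp f g) (fun p => y p.1 p.2) (liftBlock S C) := by
  have hinner : (fun i => g fun j => flipSet (fun p => y p.1 p.2) (liftBlock S C) (i, j)) =
      flipSet (fun i => g (y i)) S := by
    funext i
    by_cases hi : i ∈ S
    · have hflip : (fun j => flipSet (fun p => y p.1 p.2) (liftBlock S C) (i, j)) =
          flipSet (y i) (C i) := by
        funext j; simp [hi]
      rw [hflip, Bool.eq_not.2 (hC i hi)]
      simp [hi]
    · simp [hi]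
  change f _ ≠ f _
  rw [hinner]
  exact hS

theorem card_le_bsAt_comp {ι : Type*} [Fintype ι] {y : I → J → Bool} {S : ι → Finset I}
    {C : ι → I → Finset J} (hS : ∀ t, IsBlock f (fun i => g (y i)) (S t))
    (hC : ∀ t, ∀ i ∈ S t, IsBlock g (y i) (C t i))
    (hd : Pairwise fun t t' => ∀ i ∈ S t, i ∈ S t' → Disjoint (C t i) (C t' i)) :
    Fintype.card ι ≤ bsAt (comp f g) (fun p => y p.1 p.2) := by
  refine card_le_bsAt (fun t => isBlock_comp (hS t) (hC t)) fun t t' htt => ?_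
  simp only [onFun, Finset.disjoint_left, mem_liftBlock]
  rintro p ⟨hpS, hpC⟩ ⟨hpS', hpC'⟩
  exact Finset.disjoint_left.1 (hd htt p.1 hpS hpS') hpC hpC'

theorem bsb_mul_bsMin_le_bsb_comp (hg : Surjective g) {b : Bool} (hb : ∃ x, f x = b) :
    bsb f b * bsMin g ≤ bsb (comp f g) b := by
  obtain ⟨x, hxb, hx⟩ := exists_bsAt_eq_bsb hb
  obtain ⟨B, hB, hBd⟩ := exists_blocks_of_le_bsAt hx.ge
  have hy (i : I) : ∃ y, g y = x i ∧ bsMin g ≤ bsAt g y := by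
    obtain ⟨y, hyx, hy⟩ := exists_bsAt_eq_bsb (hg (x i))
    exact ⟨y, hyx, hy ▸ bsMin_le_bsb g (x i)⟩
  choose y hyx hy using hy
  choose C hC hCd using fun i => exists_blocks_of_le_bsAt (hy i)
  have hgy : (fun i => g (y i)) = x := funext hyx
  calc bsb f b * bsMin g = Fintype.card (Fin (bsb f b) × Fin (bsMin g)) := by simp
    _ ≤ bsAt (comp f g) (fun p => y p.1 p.2) := by
      refine card_le_bsAt_comp (S := fun q => B q.1) (C := fun q i => C i q.2)
        (fun q => hgy ▸ hB q.1) (fun q i _ => hC i q.2) fun q q' hqq i hi hi' => ?_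
      have hq1 : q.1 = q'.1 := by
        by_contra hne
        exact Finset.disjoint_left.1 (hBd hne) hi hi'
      exact hCd i fun hq2 => hqq (Prod.ext hq1 hq2)
    _ ≤ bsb (comp f g) b := bsAt_le_bsb (by simp [BS.comp, hyx, hxb])

theorem bsb_le_bsb_comp (hg : Surjective g) {z : I → Bool} {i : I} (hz : IsBlock f z {i}) :
    bsb g (z i) ≤ bsb (comp f g) (f z) := by
  obtain ⟨w, hwz, hw⟩ := exists_bsAt_eq_bsb (hg (z i))
  obtain ⟨C, hC, hCd⟩ := exists_blocks_of_le_bsAt hw.ge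
  set y := update (fun i' => surjInv hg (z i')) i w
  have hgy : (fun i' => g (y i')) = z := by
    funext i'
    by_cases hi' : i' = i
    · subst hi'; simp [y, hwz]
    · simp [y, hi', surjInv_eq hg]
  calc bsb g (z i) = Fintype.card (Fin (bsb g (z i))) := by simp
    _ ≤ bsAt (comp f g) (fun p => y p.1 p.2) := by
      refine card_le_bsAt_comp (S := fun _ => {i}) (C := fun r _ => C r)
        (fun _ => hgy ▸ hz) (fun r i' hi' => ?_) fun r r' hrr _ _ _ => hCd hrr
      rw [Finset.mem_singleton.1 hi']
      simpa [y] using hC r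
    _ ≤ bsb (comp f g) (f z) := bsAt_le_bsb (by simp only [BS.comp, ← hgy])

theorem bsMin_mul_bsMin_le_bsMin_comp (hf : Surjective f) (hg : Surjective g) :
    bsMin f * bsMin g ≤ bsMin (comp f g) :=
  le_min
    ((Nat.mul_le_mul_right _ (bsMin_le_bsb f false)).trans (bsb_mul_bsMin_le_bsb_comp hg (hf _)))
    ((Nat.mul_le_mul_right _ (bsMin_le_bsb f true)).trans (bsb_mul_bsMin_le_bsb_comp hg (hf _)))

theorem bs_le_bsMin_comp (hmono : ¬Monotone f) (hanti : ¬Antitone f) (hg : Surjective g) :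
    bs g ≤ bsMin (comp f g) := by
  have h (b : Bool) : bs g ≤ bsb (comp f g) b := bs_le_of_forall_bsb_le fun b' => by
    obtain ⟨z, i, hz, hzi, hblock⟩ := exists_isBlock_singleton hmono hanti b b'
    simpa [hz, hzi] using bsb_le_bsb_comp hg hblock
  exact le_min (h false) (h true)

end Comp

section Equiv

variable {I I' : Type*} [DecidableEq I] [DecidableEq I']

theorem flipSet_map_comp (e : I ≃ I') (y : I' → Bool) (B : Finset I) :
    flipSet y (B.map e.toEmbedding) ∘ e = flipSet (y ∘ e) B := by
  funext i; simp

variable [Fintype I] [Fintype I'] {h : (I → Bool) → Bool} {h' : (I' → Bool) → Bool}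

theorem bsAt_le_bsAt_of_equiv (e : I ≃ I') (hh : ∀ X, h' X = h (X ∘ e)) (x : I → Bool) :
    bsAt h x ≤ bsAt h' (x ∘ e.symm) := by
  obtain ⟨B, hB, hd⟩ := exists_blocks_of_le_bsAt (le_refl (bsAt h x))
  have hx : x ∘ e.symm ∘ e = x := by funext i; simp
  calc bsAt h x = Fintype.card (Fin (bsAt h x)) := by simp
    _ ≤ bsAt h' (x ∘ e.symm) := by
      refine card_le_bsAt (B := fun t => (B t).map e.toEmbedding) (fun t => ?_) fun t t' htt => ?_
      · rw [IsBlock, hh, hh, flipSet_map_comp, Function.comp_assoc, hx]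
        exact hB t
      · simpa using hd htt

theorem bsMin_le_bsMin_of_equiv (e : I ≃ I') (hh : ∀ X, h' X = h (X ∘ e)) :
    bsMin h ≤ bsMin h' := by
  have hbsb (b : Bool) : bsb h b ≤ bsb h' b := csSup_le' fun _ ⟨x, hx, hk⟩ =>
    hk ▸ (bsAt_le_bsAt_of_equiv e hh x).trans (bsAt_le_bsb (by simpa [hh, Function.comp_assoc]))
  exact le_min ((bsMin_le_bsb h false).trans (hbsb false)) ((bsMin_le_bsb h true).trans (hbsb true))

end Equiv

section Iterate

variable {n : ℕ} (f : (Fin n → Bool) → Bool)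

theorem iter_succ_apply' (k : ℕ) (X : (Fin (k + 1) → Fin n) → Bool) :
    iter f (k + 1) X = iter f k fun s => f fun i => X (Fin.snoc s i) := by
  induction k with
  | zero =>
    change f _ = f _
    congr 1
    funext i
    change X _ = X _
    congr 1
    funext j
    fin_cases j
    rfl
  | succ k ih =>
    change f _ = f _
    congr 1
    funext i
    rw [ih]
    simp only [Fin.cons_snoc_eq_snoc_cons]

theorem iter_add_apply (m k : ℕ) (X : (Fin (m + k) → Fin n) → Bool) :
    iter f (m + k) X = comp (iter f m) (iter f k) (X ∘ Fin.appendEquiv m k) := by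
  induction k with
  | zero =>
    change iter f m X = iter f m fun s => X (Fin.append s Fin.elim0)
    simp [Fin.append_elim0]
  | succ k ih =>
    change iter f (m + k + 1) X = _
    rw [iter_succ_apply', ih]
    change iter f m _ = iter f m _
    congr 1
    funext s
    rw [iter_succ_apply']
    change (iter f k fun t => f fun i => X (Fin.snoc (Fin.append s t) i)) =
      iter f k fun t => f fun i => X (Fin.append s (Fin.snoc t i))
    simp only [Fin.append_snoc]

theorem iter_surjective (hf : Surjective f) (k : ℕ) : Surjective (iter f k) := by
  induction k with
  | zero => exact fun b => ⟨fun _ => b, rfl⟩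
  | succ k ih =>
    intro b
    obtain ⟨u, rfl⟩ := hf b
    refine ⟨fun s => surjInv ih (u (s 0)) (Fin.tail s), congrArg f (funext fun i => ?_)⟩
    simpa [Fin.tail] using surjInv_eq ih (u i)

theorem bsMin_iter_mul_le (hf : Surjective f) (m k : ℕ) :
    bsMin (iter f m) * bsMin (iter f k) ≤ bsMin (iter f (m + k)) :=
  (bsMin_mul_bsMin_le_bsMin_comp (iter_surjective f hf m) (iter_surjective f hf k)).trans
    (bsMin_le_bsMin_of_equiv (Fin.appendEquiv m k) (iter_add_apply f m k))

theorem bs_iter_le_bsMin_iter_succ (hmono : ¬Monotone f) (hanti : ¬Antitone f) (k : ℕ) :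
    bs (iter f k) ≤ bsMin (iter f (k + 1)) :=
  (bs_le_bsMin_comp hmono hanti (iter_surjective f (surjective_of_not_monotone hmono) k)).trans
    (bsMin_le_bsMin_of_equiv (Fin.consEquiv fun _ => Fin n) fun _ => rfl)

theorem bs_iter_le_pow (k : ℕ) : bs (iter f k) ≤ n ^ k := by
  simpa using bs_le_card (iter f k)

end Iterate

end BS

open Filter BS in
/-- Let `f` be an `n`-variate boolean function that is neither
monotone nor antimonotone.  Then `lim_{k→∞} bs(f^(k))^(1/k)` exists and is finite. -/
theorem bs_lim_exists {n : ℕ} (f : (Fin n → Bool) → Bool)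
    (hmono : ¬ Monotone f) (hanti : ¬ Antitone f) :
    ∃ L : ℝ, Filter.Tendsto (fun k : ℕ => (bs (iter f k) : ℝ) ^ (1 / (k : ℝ)))
      Filter.atTop (nhds L) := by
  have hsurj := surjective_of_not_monotone hmono
  have hpos (k : ℕ) : (0 : ℝ) < bsMin (iter f k) := by
    exact_mod_cast one_le_bsMin (iter_surjective f hsurj k)
  obtain ⟨L, hL⟩ := exists_tendsto_log_div_of_supermul (C := n) hpos
    (fun m k => by exact_mod_cast bsMin_iter_mul_le f hsurj m k)
    (fun k => by exact_mod_cast (bsMin_le_bs _).trans (bs_iter_le_pow f k))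
  have hbs : Tendsto (fun k : ℕ => Real.log (bs (iter f k)) / k) atTop (nhds L) :=
    tendsto_log_div_of_le_of_le_succ hL hpos (fun k => by exact_mod_cast bsMin_le_bs _)
      fun k => by exact_mod_cast bs_iter_le_bsMin_iter_succ f hmono hanti k
  exact ⟨Real.exp L, tendsto_rpow_one_div_of_tendsto_log_div hbs
    fun k => (hpos k).trans_le (by exact_mod_cast bsMin_le_bs _)⟩
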